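/- For all n ≥ 0: ∑_{k=0}^{n} (-1)^{n-k}·4^{n-k}·U(n,k)·(2k+1)·((2k-1)!!)² = T_{2n+1}, where U(n,k) are the generalized Stirling numbers for weights w(m)=((2m+1)/2)² and T_{2n+1} are the tangent numbers. -/

import Mathlib

/-! Put `f = tanh z`, so that `f' = 1 - f ^ 2`. Then `D²` maps `f (1 - f ^ 2) ^ i` to
`4 i ^ 2 f (1 - f ^ 2) ^ i - 2 (i + 1) (2 i + 1) f (1 - f ^ 2) ^ (i + 1)`, and the functions
`G_k = ∏_{j < k} ((2 j + 1) ^ 2 - D²) f` turn out to be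
`G_k = (2 k)! ∑_{i ≤ k} binom(2 (k - i), k - i) / 4 ^ (k - i) · f (1 - f ^ 2) ^ i`.
Then `(D² / 4) G_k = ((2 k + 1) / 2) ^ 2 G_k - G_{k+1} / 4`, which after rescaling `G_k` by
`(-4) ^ (-k)` is the recurrence of `U`, so
`D^{2n} f = ∑_k (-1) ^ k 4 ^ (n - k) U(n, k) G_k`. Comparing coefficients of `z`, the left side gives
`(2 n + 1)! [z ^ (2 n + 1)] f`, and each `f (1 - f ^ 2) ^ i` contributes `1`, so `[z] G_k` is the sum
of its coefficients, `(2 k + 1) ((2 k - 1)!!) ^ 2`. -/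

/-- Generalized Stirling numbers of the second kind for the weights
w(m) = ((2m+1)/2)²: U(n,k) = U(n-1,k-1) + ((2k+1)/2)² U(n-1,k),
U(0,k)=[k=0], U(n,0) = (1/4)^n. -/
noncomputable def genStirlingU : ℕ → ℕ → ℚ
  | 0, 0 => 1
  | 0, _ + 1 => 0
  | n + 1, 0 => (1 / 4) * genStirlingU n 0
  | n + 1, k + 1 => genStirlingU n k + ((2 * (k + 1) + 1) / 2 : ℚ) ^ 2 * genStirlingU n (k + 1)

/-- The odd double factorial (2k-1)!! = (2k)!/(2^k k!). -/
noncomputable def oddDoubleFactorial (k : ℕ) : ℚ :=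
  ((2 * k).factorial : ℚ) / (2 ^ k * (k.factorial : ℚ))

open PowerSeries in
/-- The generating function (e^{2z}-1)/(e^{2z}+1) of the tangent numbers. -/
noncomputable def tangentSeries : PowerSeries ℚ :=
  (PowerSeries.rescale (2 : ℚ) (PowerSeries.exp ℚ) - 1) *
    (PowerSeries.rescale (2 : ℚ) (PowerSeries.exp ℚ) + 1)⁻¹

/-- The tangent numbers T_{2n+1}, via
(e^{2z}-1)/(e^{2z}+1) = ∑_{k≥0} (-1)^k T_{2k+1} z^{2k+1}/(2k+1)!. -/
noncomputable def tangentNumber (n : ℕ) : ℚ :=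
  (-1) ^ n * ((2 * n + 1).factorial : ℚ) * PowerSeries.coeff (R := ℚ) (2 * n + 1) tangentSeries

open Finset
open scoped Nat

theorem centralBinom_div_four_pow_succ (j : ℕ) :
    (2 * j + 2 : ℚ) * ((j + 1).centralBinom / 4 ^ (j + 1)) =
      (2 * j + 1) * (j.centralBinom / 4 ^ j) := by
  have h := congrArg (Nat.cast : ℕ → ℚ) (Nat.succ_mul_centralBinom_succ j)
  push_cast at h
  rw [pow_succ]
  field_simp
  linear_combination 2 * h

theorem sum_range_centralBinom_div_four_pow (k : ℕ) :
    ∑ j ∈ range (k + 1), (j.centralBinom / 4 ^ j : ℚ) =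
      (2 * k + 1) * (k.centralBinom / 4 ^ k) := by
  induction k with
  | zero => simp
  | succ k ih =>
    rw [sum_range_succ, ih]
    push_cast
    linear_combination -centralBinom_div_four_pow_succ k

theorem oddDoubleFactorial_sq (k : ℕ) :
    oddDoubleFactorial k ^ 2 = (2 * k)! * (k.centralBinom / 4 ^ k) := by
  rw [oddDoubleFactorial, Nat.centralBinom_eq_two_mul_choose,
    Nat.cast_choose ℚ (by omega : k ≤ 2 * k), show 2 * k - k = k by omega,
    show (4 : ℚ) ^ k = (2 ^ k) ^ 2 by rw [← pow_mul, mul_comm, pow_mul]; norm_num]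
  field_simp

theorem factorial_two_mul_succ (k : ℕ) :
    ((2 * (k + 1))! : ℚ) = (2 * k + 2) * (2 * k + 1) * (2 * k)! := by
  rw [show 2 * (k + 1) = 2 * k + 1 + 1 by ring, Nat.factorial_succ, Nat.factorial_succ]
  push_cast
  ring

/-- The coefficient of `tanh · sech ^ (2 i)` in `∏_{j < k} ((2 j + 1) ^ 2 - D²) tanh`. -/
noncomputable def tanhSechCoeff (k i : ℕ) : ℚ :=
  if i ≤ k then (2 * k)! * ((k - i).centralBinom / 4 ^ (k - i)) else 0

theorem tanhSechCoeff_of_lt {k i : ℕ} (h : k < i) : tanhSechCoeff k i = 0 :=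
  if_neg (by omega)

theorem tanhSechCoeff_succ_zero (k : ℕ) :
    tanhSechCoeff (k + 1) 0 = (2 * k + 1) ^ 2 * tanhSechCoeff k 0 := by
  simp only [tanhSechCoeff, zero_le, if_true, Nat.sub_zero, factorial_two_mul_succ]
  linear_combination (2 * (k : ℚ) + 1) * (2 * k)! * centralBinom_div_four_pow_succ k

theorem tanhSechCoeff_succ_succ (k i : ℕ) :
    tanhSechCoeff (k + 1) (i + 1) =
      ((2 * k + 1) ^ 2 - 4 * (i + 1) ^ 2) * tanhSechCoeff k (i + 1) +
        2 * (i + 1) * (2 * i + 1) * tanhSechCoeff k i := by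
  rcases lt_trichotomy i k with hik | rfl | hki
  · obtain ⟨j, hj⟩ : ∃ j, k = i + j + 1 := ⟨k - i - 1, by omega⟩
    simp only [tanhSechCoeff, if_pos (by omega : i + 1 ≤ k + 1), if_pos (by omega : i + 1 ≤ k),
      if_pos hik.le, show k + 1 - (i + 1) = j + 1 by omega, show k - (i + 1) = j by omega,
      show k - i = j + 1 by omega, factorial_two_mul_succ]
    rw [show (k : ℚ) = i + j + 1 by exact_mod_cast hj]
    linear_combination (4 * (i : ℚ) + 2 * j + 5) * (2 * k)! * centralBinom_div_four_pow_succ j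
  · simp only [tanhSechCoeff, le_refl, if_true, if_neg (by omega : ¬ i + 1 ≤ i),
      factorial_two_mul_succ, Nat.sub_self]
    ring
  · simp [tanhSechCoeff_of_lt, hki, show k < i + 1 by omega]

theorem sum_tanhSechCoeff (k : ℕ) :
    ∑ i ∈ range (k + 1), tanhSechCoeff k i = (2 * k + 1) * oddDoubleFactorial k ^ 2 := by
  have hreflect : ∑ i ∈ range (k + 1), tanhSechCoeff k i =
      ∑ j ∈ range (k + 1), (2 * k)! * (j.centralBinom / 4 ^ j : ℚ) := by
    rw [← sum_range_reflect]
    refine sum_congr rfl fun j hj => ?_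
    rw [mem_range] at hj
    rw [tanhSechCoeff, if_pos (by omega), show k - (k + 1 - 1 - j) = j by omega]
  rw [hreflect, ← mul_sum, sum_range_centralBinom_div_four_pow, oddDoubleFactorial_sq]
  ring

theorem genStirlingU_of_lt {n k : ℕ} (h : n < k) : genStirlingU n k = 0 := by
  induction n generalizing k with
  | zero => obtain ⟨k, rfl⟩ := Nat.exists_eq_add_one_of_ne_zero (by omega : k ≠ 0); rfl
  | succ n ih =>
    obtain ⟨k, rfl⟩ := Nat.exists_eq_add_one_of_ne_zero (by omega : k ≠ 0)
    rw [genStirlingU, ih (by omega), ih (by omega), mul_zero, add_zero]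

theorem pow_apply_eq_sum_genStirlingU {M : Type*} [AddCommGroup M] [Module ℚ M]
    (L : Module.End ℚ M) (g : ℕ → M)
    (hg : ∀ k : ℕ, L (g k) = ((2 * k + 1) / 2 : ℚ) ^ 2 • g k + g (k + 1)) (n : ℕ) :
    (L ^ n) (g 0) = ∑ k ∈ range (n + 1), genStirlingU n k • g k := by
  induction n with
  | zero => simp [genStirlingU]
  | succ n ih =>
    have hlast : ∑ k ∈ range (n + 1),
          (((2 * (k + 1) + 1) / 2 : ℚ) ^ 2 * genStirlingU n (k + 1)) • g (k + 1) =
        ∑ k ∈ range n,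
          (((2 * (k + 1) + 1) / 2 : ℚ) ^ 2 * genStirlingU n (k + 1)) • g (k + 1) := by
      rw [sum_range_succ, genStirlingU_of_lt (lt_add_one n), mul_zero, zero_smul, add_zero]
    rw [pow_succ', Module.End.mul_apply, ih, map_sum, sum_range_succ' _ (n + 1)]
    simp only [map_smul, hg, smul_add, sum_add_distrib, genStirlingU, add_smul, hlast]
    rw [sum_range_succ' (fun k => genStirlingU n k • ((2 * k + 1) / 2 : ℚ) ^ 2 • g k)]
    simp only [smul_smul, Nat.cast_add, Nat.cast_one, Nat.cast_zero, mul_comm (genStirlingU n _)]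
    module

section TanhDerivation

variable {R A : Type*} [CommRing R] [CommRing A] [Algebra R A] (D : Derivation R A A) {f : A}

theorem derivation_one_sub_sq_pow (hf : D f = 1 - f ^ 2) (j : ℕ) :
    D ((1 - f ^ 2) ^ j) = -(2 * j : A) * (f * (1 - f ^ 2) ^ j) := by
  cases j with
  | zero => simp
  | succ j =>
    rw [D.leibniz_pow, map_sub, D.map_one_eq_zero, D.leibniz_pow, hf]
    simp only [smul_eq_mul, nsmul_eq_mul, Nat.add_sub_cancel]
    push_cast
    ring

theorem derivation_mul_one_sub_sq_pow (hf : D f = 1 - f ^ 2) (i : ℕ) :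
    D (f * (1 - f ^ 2) ^ i) =
      (2 * i + 1 : A) * (1 - f ^ 2) ^ (i + 1) - 2 * i * (1 - f ^ 2) ^ i := by
  rw [D.leibniz, derivation_one_sub_sq_pow D hf, hf, smul_eq_mul, smul_eq_mul]
  ring

theorem derivation_derivation_mul_one_sub_sq_pow (hf : D f = 1 - f ^ 2) (i : ℕ) :
    D (D (f * (1 - f ^ 2) ^ i)) =
      (4 * i ^ 2 : A) * (f * (1 - f ^ 2) ^ i) -
        2 * (i + 1) * (2 * i + 1) * (f * (1 - f ^ 2) ^ (i + 1)) := by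
  have hmul (n : ℕ) (x : A) : D (n * x) = n * D x := by
    rw [D.leibniz, D.map_natCast, smul_zero, add_zero, smul_eq_mul]
  rw [derivation_mul_one_sub_sq_pow D hf, map_sub,
    show (2 * i + 1 : A) = ((2 * i + 1 : ℕ) : A) by push_cast; ring,
    show (2 * i : A) = ((2 * i : ℕ) : A) by push_cast; ring, hmul, hmul,
    derivation_one_sub_sq_pow D hf, derivation_one_sub_sq_pow D hf]
  push_cast
  ring

end TanhDerivation

section TanhSechSum

variable {A : Type*} [CommRing A] [Algebra ℚ A] (D : Derivation ℚ A A) {f : A}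

variable (f) in
noncomputable def tanhSechSum (k : ℕ) : A :=
  ∑ i ∈ range (k + 1), tanhSechCoeff k i • (f * (1 - f ^ 2) ^ i)

variable (f) in
theorem tanhSechSum_zero : tanhSechSum f 0 = f := by
  simp [tanhSechSum, tanhSechCoeff]

theorem tanhSechSum_succ (hf : D f = 1 - f ^ 2) (k : ℕ) :
    tanhSechSum f (k + 1) =
      ((2 * k + 1) ^ 2 : ℚ) • tanhSechSum f k - D (D (tanhSechSum f k)) := by
  set b : ℕ → A := fun i => f * (1 - f ^ 2) ^ i
  have hDD (i : ℕ) : D (D (b i)) =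
      (4 * i ^ 2 : ℚ) • b i - (2 * (i + 1) * (2 * i + 1) : ℚ) • b (i + 1) := by
    simp only [b, derivation_derivation_mul_one_sub_sq_pow D hf, Algebra.smul_def, map_mul,
      map_pow, map_add, map_natCast, map_ofNat, map_one]
  have hfirst :
      ∑ i ∈ range (k + 1), (((2 * k + 1) ^ 2 - 4 * i ^ 2) * tanhSechCoeff k i) • b i =
      ∑ i ∈ range (k + 1),
          (((2 * k + 1) ^ 2 - 4 * (i + 1) ^ 2) * tanhSechCoeff k (i + 1)) • b (i + 1) +
        ((2 * k + 1) ^ 2 * tanhSechCoeff k 0) • b 0 := by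
    rw [sum_range_succ', sum_range_succ, tanhSechCoeff_of_lt (lt_add_one k)]
    simp
  calc tanhSechSum f (k + 1)
      = ∑ i ∈ range (k + 1),
            (((2 * k + 1) ^ 2 - 4 * (i + 1) ^ 2) * tanhSechCoeff k (i + 1)) • b (i + 1) +
          ∑ i ∈ range (k + 1), (2 * (i + 1) * (2 * i + 1) * tanhSechCoeff k i) • b (i + 1) +
          ((2 * k + 1) ^ 2 * tanhSechCoeff k 0) • b 0 := by
        rw [tanhSechSum, sum_range_succ', ← sum_add_distrib, tanhSechCoeff_succ_zero]
        simp only [tanhSechCoeff_succ_succ, add_smul]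
        rfl
    _ = ∑ i ∈ range (k + 1), (((2 * k + 1) ^ 2 - 4 * i ^ 2) * tanhSechCoeff k i) • b i +
          ∑ i ∈ range (k + 1),
            (2 * (i + 1) * (2 * i + 1) * tanhSechCoeff k i) • b (i + 1) := by
        rw [hfirst]; abel
    _ = ((2 * k + 1) ^ 2 : ℚ) • tanhSechSum f k - D (D (tanhSechSum f k)) := by
        simp only [tanhSechSum, map_sum, smul_sum, ← sum_sub_distrib, ← sum_add_distrib]
        refine sum_congr rfl fun i _ => ?_
        change _ = _ • (tanhSechCoeff k i • b i) - D (D (tanhSechCoeff k i • b i))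
        rw [D.map_smul, D.map_smul, hDD]
        module

theorem derivation_pow_two_mul_apply_eq_sum_genStirlingU (hf : D f = 1 - f ^ 2) (n : ℕ) :
    ((D : Module.End ℚ A) ^ (2 * n)) f =
      ∑ k ∈ range (n + 1), ((-1) ^ k * 4 ^ (n - k) * genStirlingU n k) • tanhSechSum f k := by
  have hg (k : ℕ) :
      ((4⁻¹ : ℚ) • (D : Module.End ℚ A) ^ 2) ((-4⁻¹ : ℚ) ^ k • tanhSechSum f k) =
      ((2 * k + 1) / 2 : ℚ) ^ 2 • ((-4⁻¹ : ℚ) ^ k • tanhSechSum f k) +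
        (-4⁻¹ : ℚ) ^ (k + 1) • tanhSechSum f (k + 1) := by
    rw [tanhSechSum_succ D hf k]
    simp only [pow_two, map_smul, LinearMap.smul_apply, Module.End.mul_apply, Derivation.coeFn_coe]
    module
  have h := pow_apply_eq_sum_genStirlingU _ _ hg n
  rw [smul_pow, LinearMap.smul_apply, pow_zero, one_smul, tanhSechSum_zero, ← pow_mul] at h
  calc ((D : Module.End ℚ A) ^ (2 * n)) f
      = (4 : ℚ) ^ n • ((4⁻¹ : ℚ) ^ n • ((D : Module.End ℚ A) ^ (2 * n)) f) := by
        rw [smul_smul, ← mul_pow]; norm_num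
    _ = _ := by
        rw [h, smul_sum]
        refine sum_congr rfl fun k hk => ?_
        obtain ⟨m, rfl⟩ := exists_add_of_le (mem_range_succ_iff.mp hk)
        have hscale : (4 : ℚ) ^ (k + m) * (-4⁻¹) ^ k = (-1) ^ k * 4 ^ m := by
          rw [pow_add, mul_right_comm, ← mul_pow]
          norm_num
        rw [smul_smul, smul_smul, Nat.add_sub_cancel_left]
        congr 1
        linear_combination genStirlingU (k + m) k * hscale

end TanhSechSum

open PowerSeries

theorem derivative_rescale {R : Type*} [CommSemiring R] (a : R) (g : R⟦X⟧) :
    d⁄dX R (rescale a g) = a • rescale a (d⁄dX R g) := by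
  ext n
  simp only [coeff_derivative, coeff_rescale, coeff_smul, smul_eq_mul, pow_succ]
  ring

theorem constantCoeff_rescale {R : Type*} [CommSemiring R] (a : R) (g : R⟦X⟧) :
    constantCoeff (rescale a g) = constantCoeff g := by
  rw [← coeff_zero_eq_constantCoeff_apply, ← coeff_zero_eq_constantCoeff_apply, coeff_rescale,
    pow_zero, one_mul]

theorem derivative_tangentSeries : d⁄dX ℚ tangentSeries = 1 - tangentSeries ^ 2 := by
  set E := rescale (2 : ℚ) (exp ℚ)
  have hE : d⁄dX ℚ E = 2 * E := by
    rw [derivative_rescale, derivative_exp, smul_eq_C_mul, map_ofNat]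
  have hJ : (E + 1) * (E + 1)⁻¹ = 1 :=
    PowerSeries.mul_inv_cancel _ (by simp [E, constantCoeff_rescale])
  rw [tangentSeries, Derivation.leibniz, derivative_inv', map_sub, map_add,
    Derivation.map_one_eq_zero, hE]
  simp only [smul_eq_mul]
  linear_combination (1 - (E - 1) * (E + 1)⁻¹) * hJ

theorem coeff_one_iterate_derivative {R : Type*} [CommSemiring R] (g : R⟦X⟧) (m : ℕ) :
    coeff 1 ((d⁄dX R)^[m] g) = (m + 1)! * coeff (m + 1) g := by
  have h : (m + 1)! = (1 + 1).ascFactorial m := by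
    simpa [add_comm] using (Nat.factorial_mul_ascFactorial 1 m).symm
  rw [coeff_iterate_derivative, add_comm 1 m, h]

theorem constantCoeff_tangentSeries : constantCoeff tangentSeries = (0 : ℚ) := by
  simp [tangentSeries, constantCoeff_rescale]

theorem coeff_one_tangentSeries : coeff 1 tangentSeries = (1 : ℚ) := by
  simpa [coeff_derivative, constantCoeff_tangentSeries] using
    congrArg (coeff 0) derivative_tangentSeries

theorem coeff_one_tanhSechSum_tangentSeries (k : ℕ) :
    coeff 1 (tanhSechSum tangentSeries k) = (2 * k + 1) * oddDoubleFactorial k ^ 2 := by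
  have hterm (i : ℕ) : coeff 1 (tangentSeries * (1 - tangentSeries ^ 2) ^ i) = 1 := by
    simp [coeff_one_mul, coeff_one_tangentSeries, constantCoeff_tangentSeries]
  simp only [tanhSechSum, map_sum, coeff_smul, hterm, smul_eq_mul, mul_one, sum_tanhSechCoeff]

theorem sum_genStirlingU_tangent (n : ℕ) :
    ∑ k ∈ Finset.range (n + 1),
        (-1 : ℚ) ^ (n - k) * 4 ^ (n - k) * genStirlingU n k * (2 * k + 1) *
          (oddDoubleFactorial k) ^ 2 =
      tangentNumber n := by
  have h := congrArg (coeff 1)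
    (derivation_pow_two_mul_apply_eq_sum_genStirlingU (d⁄dX ℚ) derivative_tangentSeries n)
  rw [Module.End.pow_apply, Derivation.coeFn_coe, coeff_one_iterate_derivative, map_sum] at h
  simp only [coeff_smul, coeff_one_tanhSechSum_tangentSeries, smul_eq_mul] at h
  rw [tangentNumber, mul_assoc, h, mul_sum]
  refine sum_congr rfl fun k hk => ?_
  obtain ⟨m, rfl⟩ := exists_add_of_le (mem_range_succ_iff.mp hk)
  have hsign : (-1 : ℚ) ^ k * (-1) ^ k = 1 := by rw [← mul_pow]; norm_num
  rw [Nat.add_sub_cancel_left, pow_add]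
  linear_combination -(-1 : ℚ) ^ m * 4 ^ m * genStirlingU (k + m) k * (2 * k + 1) *
    oddDoubleFactorial k ^ 2 * hsign
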